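/- Let G be a group whose derived subgroup G′ = [G,G] has a complement in G, i.e. there is a subgroup B ≤ G with G = G′B and G′ ∩ B = 1. Then ∇(G) is isomorphic to ∇(G_ab), where G_ab = G/G′ is the abelianization of G. -/

import Mathlib

/- Nonabelian tensor square framework (Brown–Loday). -/

namespace NATensor

variable (G : Type*) [Group G]

/-- The relator set for the nonabelian tensor square of `G`:
`g g' ⊗ h = (ᵍg' ⊗ ᵍh)(g ⊗ h)` and `g ⊗ h h' = (g ⊗ h)(ʰg ⊗ ʰh')`. -/
def rels : Set (FreeGroup (G × G)) :=
  {r | (∃ g g' h : G,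
          r = FreeGroup.of (g * g', h) *
              (FreeGroup.of (g * g' * g⁻¹, g * h * g⁻¹) * FreeGroup.of (g, h))⁻¹) ∨
       (∃ g h h' : G,
          r = FreeGroup.of (g, h * h') *
              (FreeGroup.of (g, h) * FreeGroup.of (h * g * h⁻¹, h * h' * h⁻¹))⁻¹)}

/-- The nonabelian tensor square `G ⊗ G`. -/
abbrev TS := PresentedGroup (rels G)

variable {G}

/-- The generator `g ⊗ h` of the nonabelian tensor square. -/
def tmul (g h : G) : TS G := PresentedGroup.of (g, h)

lemma mk_rel_eq_one {r : FreeGroup (G × G)} (hr : r ∈ rels G) :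
    (PresentedGroup.mk (rels G) r : TS G) = 1 :=
  (QuotientGroup.eq_one_iff r).mpr (Subgroup.subset_normalClosure hr)

lemma tmul_rel₁ (g g' h : G) :
    tmul (g * g') h = tmul (g * g' * g⁻¹) (g * h * g⁻¹) * tmul g h := by
  have h1 := mk_rel_eq_one (G := G) (Or.inl ⟨g, g', h, rfl⟩)
  simp only [map_mul, map_inv, mul_inv_eq_one] at h1
  exact h1

lemma tmul_rel₂ (g h h' : G) :
    tmul g (h * h') = tmul g h * tmul (h * g * h⁻¹) (h * h' * h⁻¹) := by
  have h1 := mk_rel_eq_one (G := G) (Or.inr ⟨g, h, h', rfl⟩)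
  simp only [map_mul, map_inv, mul_inv_eq_one] at h1
  exact h1

variable (G)

/-- The homomorphism `κ : G ⊗ G → G`, `g ⊗ h ↦ [g,h] = g h g⁻¹ h⁻¹` (its image is `[G,G]`). -/
def kappa : TS G →* G :=
  PresentedGroup.toGroup (f := fun x : G × G => x.1 * x.2 * x.1⁻¹ * x.2⁻¹) (by
    rintro r (⟨g, g', h, rfl⟩ | ⟨g, h, h', rfl⟩) <;>
      simp only [map_mul, map_inv, FreeGroup.lift_apply_of] <;> group)

variable {G}

@[simp] lemma kappa_tmul (g h : G) : kappa G (tmul g h) = g * h * g⁻¹ * h⁻¹ :=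
  PresentedGroup.toGroup.of _

variable (G)

/-- `J(G) = ker κ ≅ π₃(SK(G,1))`. -/
def J : Subgroup (TS G) := (kappa G).ker

/-- `∇(G)`: the (normal) subgroup of `G ⊗ G` generated by the elements `x ⊗ x`. -/
def nabla : Subgroup (TS G) :=
  Subgroup.normalClosure {t | ∃ x : G, t = tmul x x}

/-- `Δ(G)`: the (normal) subgroup of `G ⊗ G` generated by the `(x ⊗ y)(y ⊗ x)`. -/
def delta : Subgroup (TS G) :=
  Subgroup.normalClosure {t | ∃ x y : G, t = tmul x y * tmul y x}

instance : (nabla G).Normal := Subgroup.normalClosure_normal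

instance : (delta G).Normal := Subgroup.normalClosure_normal

/-- The exterior square `G ∧ G = (G ⊗ G)/∇(G)`. -/
abbrev ES := TS G ⧸ nabla G

/-- The symmetric square `G ⊗̃ G = (G ⊗ G)/Δ(G)`. -/
abbrev SS := TS G ⧸ delta G

variable {G}

/-- The element `g ∧ h` of the exterior square. -/
def emul (g h : G) : ES G := QuotientGroup.mk' (nabla G) (tmul g h)

/-- The image of `g ⊗ h` in the symmetric square. -/
def smul (g h : G) : SS G := QuotientGroup.mk' (delta G) (tmul g h)

variable {H : Type*} [Group H]

/-- The induced homomorphism `G ⊗ G → H ⊗ H` of a homomorphism `f : G → H`. -/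
def tmap (f : G →* H) : TS G →* TS H :=
  PresentedGroup.toGroup (f := fun x : G × G => tmul (f x.1) (f x.2)) (by
    rintro r (⟨g, g', h, rfl⟩ | ⟨g, h, h', rfl⟩) <;>
      simp only [map_mul, map_inv, FreeGroup.lift_apply_of, mul_inv_eq_one]
    · rw [tmul_rel₁]
    · rw [tmul_rel₂])

@[simp] lemma tmap_tmul (f : G →* H) (g h : G) :
    tmap f (tmul g h) = tmul (f g) (f h) :=
  PresentedGroup.toGroup.of _

lemma nabla_le_comap_nabla (f : G →* H) :
    nabla G ≤ MonoidHom.ker ((QuotientGroup.mk' (nabla H)).comp (tmap f)) := by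
  refine Subgroup.normalClosure_le_normal ?_
  rintro _ ⟨y, rfl⟩
  simp only [SetLike.mem_coe, MonoidHom.mem_ker, MonoidHom.comp_apply, tmap_tmul,
    QuotientGroup.mk'_apply, QuotientGroup.eq_one_iff]
  exact Subgroup.subset_normalClosure ⟨f y, rfl⟩

lemma delta_le_comap_delta (f : G →* H) :
    delta G ≤ MonoidHom.ker ((QuotientGroup.mk' (delta H)).comp (tmap f)) := by
  refine Subgroup.normalClosure_le_normal ?_
  rintro _ ⟨x, y, rfl⟩
  simp only [SetLike.mem_coe, MonoidHom.mem_ker, MonoidHom.comp_apply, map_mul, tmap_tmul,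
    QuotientGroup.mk'_apply, ← QuotientGroup.mk_mul, QuotientGroup.eq_one_iff]
  exact Subgroup.subset_normalClosure ⟨f x, f y, rfl⟩

/-- The induced homomorphism `G ∧ G → H ∧ H` of a homomorphism `f : G → H`. -/
def emap (f : G →* H) : ES G →* ES H :=
  QuotientGroup.lift (nabla G) ((QuotientGroup.mk' (nabla H)).comp (tmap f))
    (fun x hx => MonoidHom.mem_ker.mp (nabla_le_comap_nabla f hx))

@[simp] lemma emap_emul (f : G →* H) (g h : G) :
    emap f (emul g h) = emul (f g) (f h) := by
  show QuotientGroup.mk' (nabla H) (tmap f (tmul g h)) = _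
  rw [tmap_tmul]
  rfl

/-- The induced homomorphism `G ⊗̃ G → H ⊗̃ H` of a homomorphism `f : G → H`. -/
def smap (f : G →* H) : SS G →* SS H :=
  QuotientGroup.lift (delta G) ((QuotientGroup.mk' (delta H)).comp (tmap f))
    (fun x hx => MonoidHom.mem_ker.mp (delta_le_comap_delta f hx))

variable (G)

lemma nabla_le_ker_kappa : nabla G ≤ (kappa G).ker := by
  refine Subgroup.normalClosure_le_normal ?_
  rintro _ ⟨x, rfl⟩
  simp only [SetLike.mem_coe, MonoidHom.mem_ker, kappa_tmul]
  group

/-- The homomorphism `κ' : G ∧ G → G`, `g ∧ h ↦ [g,h]` (its image is `[G,G]`). -/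
def kappa' : ES G →* G :=
  QuotientGroup.lift (nabla G) (kappa G)
    (fun x hx => MonoidHom.mem_ker.mp (nabla_le_ker_kappa G hx))

/-- The Schur multiplier `M(G) = ker κ' ≅ H₂(G)`. -/
def M : Subgroup (ES G) := (kappa' G).ker

/-- `J̃(G) = J(G)/Δ(G) ≅ π₂ˢ(K(G,1))`, realized as the image of `J(G)` in `G ⊗̃ G`. -/
def Jt : Subgroup (SS G) := Subgroup.map (QuotientGroup.mk' (delta G)) (J G)

/-- `∇(G)/Δ(G)`, realized as the image of `∇(G)` in `G ⊗̃ G`. -/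
def nablaBar : Subgroup (SS G) := Subgroup.map (QuotientGroup.mk' (delta G)) (nabla G)

end NATensor

/-!
The elements `x ⊗ x` are central in `G ⊗ G`, invariant under conjugation, and satisfy
`(ca) ⊗ (ca) = (c ⊗ c)(a ⊗ a)β(c, a)` with `β(c, a) = (c ⊗ a)(a ⊗ c)` central, conjugation
invariant and multiplicative in `a`. Hence `(x · zyz⁻¹) ⊗ (x · zyz⁻¹) = (xy) ⊗ (xy)`, and since
`x[g, h]` is `xg` times the conjugate `hg⁻¹h⁻¹` of `g⁻¹`, the element `x ⊗ x` only depends on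
the class of `x` in `G_ab`.

A complement of `[G, G]` gives a homomorphic section `σ` of `π : G → G_ab`. The map
`G_ab ⊗ G_ab → G ⊗ G` induced by `σ` is injective (it has the retraction induced by `π`) and
carries `∇(G_ab)` onto the subgroup generated by the `σ(πx) ⊗ σ(πx) = x ⊗ x`, which is `∇(G)`
because `∇(G)` is central.
-/

lemma MonoidHom.exists_rightInverse_of_isCompl_ker {G Q : Type*} [Group G] [Group Q]
    (f : G →* Q) (hf : Function.Surjective f) {B : Subgroup G} (hB : IsCompl f.ker B) :
    ∃ σ : Q →* G, Function.RightInverse σ f := by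
  have hinj : Function.Injective (f.comp B.subtype) := by
    refine (injective_iff_map_eq_one _).mpr fun b hb => Subtype.ext ?_
    have hmem : (b : G) ∈ f.ker ⊓ B := ⟨hb, b.2⟩
    rwa [hB.inf_eq_bot, Subgroup.mem_bot] at hmem
  have hsurj : Function.Surjective (f.comp B.subtype) := by
    intro q
    obtain ⟨g, rfl⟩ := hf q
    have hg : g ∈ ((f.ker ⊔ B : Subgroup G) : Set G) := by rw [hB.sup_eq_top]; trivial
    obtain ⟨n, hn, b, hb, rfl⟩ := Set.mem_mul.mp (Subgroup.normal_mul f.ker B ▸ hg)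
    exact ⟨⟨b, hb⟩, by simp [f.mem_ker.mp hn]⟩
  let e := MulEquiv.ofBijective _ ⟨hinj, hsurj⟩
  exact ⟨B.subtype.comp e.symm.toMonoidHom, e.apply_symm_apply⟩

namespace NATensor

open scoped commutatorElement

variable {G : Type*} [Group G]

lemma tmul_mul_tmul_conj (g h a b : G) :
    tmul g h * tmul (h * g * a * (h * g)⁻¹) (h * g * b * (h * g)⁻¹) =
      tmul (g * h * a * (g * h)⁻¹) (g * h * b * (g * h)⁻¹) * tmul g h := by
  have expand₁ : tmul (g * a) (h * b) = tmul (g * a * g⁻¹) (g * h * g⁻¹) *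
      tmul (g * h * a * (g * h)⁻¹) (g * h * b * (g * h)⁻¹) *
      (tmul g h * tmul (h * g * h⁻¹) (h * b * h⁻¹)) := by
    rw [tmul_rel₁ g a, tmul_rel₂ g h b,
      show g * (h * b) * g⁻¹ = g * h * g⁻¹ * (g * b * g⁻¹) by group, tmul_rel₂ (g * a * g⁻¹)]
    congr 3 <;> group
  have expand₂ : tmul (g * a) (h * b) = tmul (g * a * g⁻¹) (g * h * g⁻¹) *
      (tmul g h * tmul (h * g * a * (h * g)⁻¹) (h * g * b * (h * g)⁻¹)) *
      tmul (h * g * h⁻¹) (h * b * h⁻¹) := by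
    rw [tmul_rel₂ (g * a) h b, tmul_rel₁ g a h,
      show h * (g * a) * h⁻¹ = h * g * h⁻¹ * (h * a * h⁻¹) by group, tmul_rel₁ (h * g * h⁻¹)]
    simp only [mul_assoc]
    congr 4 <;> group
  have key := expand₁.symm.trans expand₂
  simp only [mul_assoc, mul_left_cancel_iff] at key
  simp only [← mul_assoc, mul_right_cancel_iff] at key
  exact key.symm

lemma mem_center_of_commute_tmul {z : TS G} (hz : ∀ a b : G, Commute z (tmul a b)) :
    z ∈ Subgroup.center (TS G) := by
  rw [← Subgroup.centralizer_univ, ← Subgroup.coe_top, ← PresentedGroup.closure_range_of,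
    Subgroup.centralizer_closure]
  rintro _ ⟨⟨a, b⟩, rfl⟩
  exact (hz a b).symm.eq

lemma tmul_self_mem_center (x : G) : tmul x x ∈ Subgroup.center (TS G) :=
  mem_center_of_commute_tmul fun a b => show tmul x x * tmul a b = tmul a b * tmul x x by
    convert tmul_mul_tmul_conj x x ((x * x)⁻¹ * a * (x * x)) ((x * x)⁻¹ * b * (x * x))
      using 2 <;> congr 1 <;> group

lemma tmul_self_commute (x : G) (t : TS G) : Commute (tmul x x) t :=
  (Subgroup.mem_center_iff.mp (tmul_self_mem_center x) t).symm

lemma tmul_self_conj (x y : G) : tmul (x * y * x⁻¹) (x * y * x⁻¹) = tmul y y := by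
  have h₁ := tmul_rel₁ x y y
  have h₂ := tmul_rel₁ y (y⁻¹ * x * y) y
  simp only [mul_assoc, mul_inv_cancel_left, mul_inv_cancel, mul_one] at h₁ h₂
  rw [h₁, ← (tmul_self_commute y _).eq] at h₂
  simpa only [mul_assoc] using mul_right_cancel h₂

def tmulSymm (a b : G) : TS G := tmul a b * tmul b a

lemma tmul_self_mul (c a : G) : tmul (c * a) (c * a) = tmul c c * tmul a a * tmulSymm c a := by
  calc tmul (c * a) (c * a) = tmul (a * (a⁻¹ * c * a)) (c * a) := by group
    _ = tmul c (a * c) * tmul a (a * (a⁻¹ * c * a)) := by rw [tmul_rel₁]; congr 2 <;> group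
    _ = tmul c a * tmul c c * (tmul a a * tmul a c) := by
        rw [tmul_rel₂ c a c, tmul_rel₂ a a, tmul_self_conj a c]; congr 3 <;> group
    _ = tmul c c * tmul a a * tmulSymm c a := by
        rw [tmulSymm, ← (tmul_self_commute c (tmul c a)).eq, mul_assoc, ← mul_assoc (tmul c a),
          ← (tmul_self_commute a (tmul c a)).eq]
        group

lemma tmulSymm_eq (a b : G) :
    tmulSymm a b = (tmul a a * tmul b b)⁻¹ * tmul (a * b) (a * b) :=
  eq_inv_mul_of_mul_eq (tmul_self_mul a b).symm

lemma tmulSymm_mem_center (a b : G) : tmulSymm a b ∈ Subgroup.center (TS G) := by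
  rw [tmulSymm_eq]
  exact mul_mem (inv_mem (mul_mem (tmul_self_mem_center a) (tmul_self_mem_center b)))
    (tmul_self_mem_center _)

lemma tmulSymm_commute (a b : G) (t : TS G) : Commute (tmulSymm a b) t :=
  (Subgroup.mem_center_iff.mp (tmulSymm_mem_center a b) t).symm

lemma tmulSymm_conj (z a b : G) : tmulSymm (z * a * z⁻¹) (z * b * z⁻¹) = tmulSymm a b := by
  rw [tmulSymm_eq, tmulSymm_eq, show z * a * z⁻¹ * (z * b * z⁻¹) = z * (a * b) * z⁻¹ by group,
    tmul_self_conj, tmul_self_conj, tmul_self_conj]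

lemma tmulSymm_mul_right (x y z : G) : tmulSymm x (y * z) = tmulSymm x y * tmulSymm x z := by
  calc tmulSymm x (y * z) = tmul x y * tmulSymm (y * x * y⁻¹) (y * z * y⁻¹) * tmul y x := by
        rw [tmulSymm, tmulSymm, tmul_rel₂ x y z, tmul_rel₁ y z x]; group
    _ = tmulSymm x y * tmulSymm x z := by
        rw [tmulSymm_conj, mul_assoc, (tmulSymm_commute x z _).eq, ← mul_assoc]; rfl

lemma tmulSymm_conj_right (x z y : G) : tmulSymm x (z * y * z⁻¹) = tmulSymm x y := by
  have h := tmulSymm_mul_right x (z * y * z⁻¹) z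
  rw [inv_mul_cancel_right, tmulSymm_mul_right, (tmulSymm_commute x z _).eq] at h
  exact (mul_right_cancel h).symm

lemma tmul_self_mul_conj (x z y : G) :
    tmul (x * (z * y * z⁻¹)) (x * (z * y * z⁻¹)) = tmul (x * y) (x * y) := by
  rw [tmul_self_mul x, tmul_self_mul x, tmul_self_conj, tmulSymm_conj_right]

lemma tmul_self_mul_commutatorElement (x g h : G) :
    tmul (x * ⁅g, h⁆) (x * ⁅g, h⁆) = tmul x x := by
  rw [commutatorElement_def, show x * (g * h * g⁻¹ * h⁻¹) = x * g * (h * g⁻¹ * h⁻¹) by group,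
    tmul_self_mul_conj, mul_inv_cancel_right]

lemma tmul_self_mul_of_mem_commutator {c : G} (hc : c ∈ commutator G) (x : G) :
    tmul (x * c) (x * c) = tmul x x := by
  rw [commutator_eq_closure] at hc
  induction hc using Subgroup.closure_induction generalizing x with
  | mem _ hc =>
    obtain ⟨g, h, rfl⟩ := hc
    exact tmul_self_mul_commutatorElement x g h
  | one => rw [mul_one]
  | mul c d _ _ hc hd => rw [← mul_assoc, hd, hc]
  | inv c _ hc => rw [← hc (x * c⁻¹), inv_mul_cancel_right]

lemma tmul_self_eq_of_abelianization_of_eq {x y : G}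
    (h : Abelianization.of x = Abelianization.of y) : tmul x x = tmul y y := by
  have hc : x⁻¹ * y ∈ commutator G := by
    rw [← Abelianization.ker_of, MonoidHom.mem_ker, map_mul, map_inv, h, inv_mul_cancel]
  rw [← tmul_self_mul_of_mem_commutator hc x, mul_inv_cancel_left]

lemma nabla_eq_closure : nabla G = Subgroup.closure (Set.range fun x : G => tmul x x) := by
  have hcentral : Subgroup.closure (Set.range fun x : G => tmul x x) ≤ Subgroup.center (TS G) :=
    (Subgroup.closure_le _).mpr (Set.range_subset_iff.mpr tmul_self_mem_center)
  have hnormal : (Subgroup.closure (Set.range fun x : G => tmul x x)).Normal :=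
    ⟨fun n hn g => by rwa [Subgroup.mem_center_iff.mp (hcentral hn) g, mul_inv_cancel_right]⟩
  refine le_antisymm (Subgroup.normalClosure_le_normal ?_) ?_
  · rintro _ ⟨x, rfl⟩
    exact Subgroup.subset_closure ⟨x, rfl⟩
  · rw [Subgroup.closure_le]
    rintro _ ⟨x, rfl⟩
    exact Subgroup.subset_normalClosure ⟨x, rfl⟩

variable {H : Type*} [Group H]

lemma tmap_comp {K : Type*} [Group K] (f : H →* K) (g : G →* H) :
    tmap (f.comp g) = (tmap f).comp (tmap g) :=
  PresentedGroup.ext fun ⟨a, b⟩ => by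
    change tmap _ (tmul a b) = tmap f (tmap g (tmul a b))
    simp

lemma tmap_id : tmap (MonoidHom.id G) = MonoidHom.id (TS G) :=
  PresentedGroup.ext fun ⟨a, b⟩ => by
    change tmap _ (tmul a b) = tmul a b
    simp

noncomputable def nablaEquivOfRightInverse (f : G →* H) (s : H →* G)
    (hfs : Function.RightInverse s f) (hsf : ∀ x, tmul (s (f x)) (s (f x)) = tmul x x) :
    nabla G ≃* nabla H :=
  have hinj : Function.Injective (tmap s) := by
    refine Function.LeftInverse.injective (g := tmap f) fun t => ?_
    rw [← MonoidHom.comp_apply, ← tmap_comp, show f.comp s = MonoidHom.id H from MonoidHom.ext hfs,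
      tmap_id, MonoidHom.id_apply]
  have hmap : (nabla H).map (tmap s) = nabla G := by
    rw [nabla_eq_closure, nabla_eq_closure, MonoidHom.map_closure, ← Set.range_comp]
    congr 1
    ext t
    constructor
    · rintro ⟨a, rfl⟩
      exact ⟨s a, by simp⟩
    · rintro ⟨x, rfl⟩
      exact ⟨f x, by simp [hsf]⟩
  ((nabla H).equivMapOfInjective (tmap s) hinj |>.trans (MulEquiv.subgroupCongr hmap)).symm

end NATensor

open NATensor in
/-- if the derived subgroup `[G,G]` has a complement `B` in `G`
(`G = [G,G]B` and `[G,G] ∩ B = 1`), then `∇(G) ≅ ∇(G_ab)`. -/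
theorem nabla_iso_nabla_abelianization (G : Type*) [Group G]
    (B : Subgroup G) (hB1 : commutator G ⊔ B = ⊤) (hB2 : commutator G ⊓ B = ⊥) :
    Nonempty (↥(nabla G) ≃* ↥(nabla (Abelianization G))) := by
  have hB : IsCompl (Abelianization.of : G →* Abelianization G).ker B := by
    rw [Abelianization.ker_of]
    exact ⟨disjoint_iff.mpr hB2, codisjoint_iff.mpr hB1⟩
  obtain ⟨σ, hσ⟩ :=
    Abelianization.of.exists_rightInverse_of_isCompl_ker QuotientGroup.mk_surjective hB
  exact ⟨nablaEquivOfRightInverse _ σ hσ fun x => tmul_self_eq_of_abelianization_of_eq (hσ _)⟩
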